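/- arXiv:1708.06998 — 6 statements merged into one kernel-verified Lean document; each statement's English description precedes it below -/
import Mathlib

section
/- Let M be a timelike surface in ℝ^{n,1} with a canonical null direction with respect to a constant unit spacelike vector Z. Then A_{Z^⊥}(Z^⊤) = 0 and ∇_{Z^⊤} Z^⊤ = 0; in particular the integral curves of Z^⊤ are geodesics of M. -/
/-!
Since `Z^⊤` is null, `0 = Y ⟨Z^⊤, Z^⊤⟩ = 2 ⟨∇_Y Z^⊤, Z^⊤⟩ = 2 ⟨A_{Z^⊥} Y, Z^⊤⟩ = 2 ⟨A_{Z^⊥} Z^⊤, Y⟩`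
for every tangent `Y`, by metric compatibility, the first compatibility equation and the
self-adjointness of the shape operator. A vector orthogonal to the null frame `(Z^⊤, W)` vanishes,
so `A_{Z^⊥} Z^⊤ = 0`, and then `∇_{Z^⊤} Z^⊤ = A_{Z^⊥} Z^⊤ = 0`.
-/

section

variable {Mp T Nv : Type}

theorem inner_covDeriv_self_eq_zero_of_null (g : T → T → Mp → ℝ) (D : T → T → T)
    (d : T → (Mp → ℝ) → Mp → ℝ) (g_symm : ∀ X Y, g X Y = g Y X)
    (metr : ∀ X Y Y', d X (g Y Y') = g (D X Y) Y' + g Y (D X Y'))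
    (dconst : ∀ X (c : ℝ), d X (fun _ => c) = 0) {v : T} (hv : g v v = 0) (Y : T) :
    g (D Y v) v = 0 := by
  have h := metr Y v v
  rw [hv, g_symm v, show (0 : Mp → ℝ) = fun _ => (0 : ℝ) from rfl, dconst] at h
  funext p
  exact add_self_eq_zero.mp (congrFun h p).symm

theorem shapeOperator_self_adjoint (g : T → T → Mp → ℝ) (gN : Nv → Nv → Mp → ℝ)
    (II : T → T → Nv) (A : Nv → T → T) (II_symm : ∀ X Y, II X Y = II Y X)
    (shape : ∀ ν X Y, g (A ν X) Y = gN (II X Y) ν) (ν : Nv) (X Y : T) :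
    g (A ν X) Y = g (A ν Y) X := by
  rw [shape, shape, II_symm]

theorem eq_zero_of_inner_frame_eq_zero [AddCommGroup T] [Module (Mp → ℝ) T]
    (g : T → T → Mp → ℝ) {E F : T} (frame : ∀ v : T, v = (-(g v F)) • E + (-(g v E)) • F)
    {v : T} (hE : g v E = 0) (hF : g v F = 0) : v = 0 := by
  rw [frame v, hE, hF]
  simp

end

theorem stmt2_general
    (Mp T Nv : Type)
    [AddCommGroup T] [Module (Mp → ℝ) T]
    -- the induced (Lorentzian) metric on tangent fields and the (Riemannian) metric on normal fields
    (g : T → T → Mp → ℝ) (gN : Nv → Nv → Mp → ℝ)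
    -- Levi-Civita connection of M, normal connection, second fundamental form, shape operator
    (D : T → T → T)
    (II : T → T → Nv) (A : Nv → T → T)
    -- action of vector fields on functions, Lie bracket, gradient
    (d : T → (Mp → ℝ) → Mp → ℝ)
    -- the tangent and normal parts of Z and the lightlike field W
    (ZT W : T) (ZP : Nv)
    (g_symm : ∀ X Y, g X Y = g Y X)
    (II_symm : ∀ X Y, II X Y = II Y X)
    (shape : ∀ ν X Y, g (A ν X) Y = gN (II X Y) ν)
    (metr : ∀ X Y Y', d X (g Y Y') = g (D X Y) Y' + g Y (D X Y'))
    (dconst : ∀ X (c : ℝ), d X (fun _ => c) = 0)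
    -- (Z^⊤, W) is a frame of lightlike tangent fields with ⟨Z^⊤, W⟩ = -1
    (frame : ∀ v : T, v = (-(g v W)) • ZT + (-(g v ZT)) • W)
    (hZT : g ZT ZT = 0)
    -- the compatibility equations coming from Z being a constant vector field
    (compat1 : ∀ X, D X ZT = A ZP X) :
    A ZP ZT = 0 ∧ D ZT ZT = 0 := by
  have hA_orth : ∀ Y, g (A ZP ZT) Y = 0 := fun Y => by
    rw [shapeOperator_self_adjoint g gN II A II_symm shape, ← compat1]
    exact inner_covDeriv_self_eq_zero_of_null g D d g_symm metr dconst hZT Y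
  have hA : A ZP ZT = 0 := eq_zero_of_inner_frame_eq_zero g frame (hA_orth ZT) (hA_orth W)
  exact ⟨hA, (compat1 ZT).trans hA⟩

/-- A_{Z^⊥}(Z^⊤) = 0 and ∇_{Z^⊤} Z^⊤ = 0 for a timelike surface with a canonical
null direction (so the integral curves of Z^⊤ are geodesics). -/
theorem stmt2
    (Mp T Nv : Type)
    [AddCommGroup T] [Module (Mp → ℝ) T]
    [AddCommGroup Nv] [Module (Mp → ℝ) Nv]
    -- the induced (Lorentzian) metric on tangent fields and the (Riemannian) metric on normal fields
    (g : T → T → Mp → ℝ) (gN : Nv → Nv → Mp → ℝ)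
    -- Levi-Civita connection of M, normal connection, second fundamental form, shape operator
    (D : T → T → T) (Dn : T → Nv → Nv)
    (II : T → T → Nv) (A : Nv → T → T)
    -- action of vector fields on functions, Lie bracket, gradient
    (d : T → (Mp → ℝ) → Mp → ℝ) (lie : T → T → T) (grad : (Mp → ℝ) → T)
    -- the tangent and normal parts of Z and the lightlike field W
    (ZT W : T) (ZP : Nv)
    (g_symm : ∀ X Y, g X Y = g Y X)
    (gN_symm : ∀ μ ν, gN μ ν = gN ν μ)
    (gN_def : ∀ ν : Nv, gN ν ν = 0 → ν = 0)
    (II_symm : ∀ X Y, II X Y = II Y X)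
    (shape : ∀ ν X Y, g (A ν X) Y = gN (II X Y) ν)
    (metr : ∀ X Y Y', d X (g Y Y') = g (D X Y) Y' + g Y (D X Y'))
    (metrN : ∀ X μ ν, d X (gN μ ν) = gN (Dn X μ) ν + gN μ (Dn X ν))
    (tors : ∀ X Y, lie X Y = D X Y - D Y X)
    (dconst : ∀ X (c : ℝ), d X (fun _ => c) = 0)
    (grad_def : ∀ h X, g (grad h) X = d X h)
    -- (Z^⊤, W) is a frame of lightlike tangent fields with ⟨Z^⊤, W⟩ = -1
    (frame : ∀ v : T, v = (-(g v W)) • ZT + (-(g v ZT)) • W)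
    (hZT : g ZT ZT = 0) (hZTne : ZT ≠ 0)
    (hW : g W W = 0) (hWne : W ≠ 0)
    (hZTW : g ZT W = fun _ => (-1 : ℝ))
    -- Z is unit spacelike, so Z^⊥ is a unit normal field
    (hZP : gN ZP ZP = fun _ => (1 : ℝ))
    -- the compatibility equations coming from Z being a constant vector field
    (compat1 : ∀ X, D X ZT = A ZP X)
    (compat2 : ∀ X, Dn X ZP = -(II ZT X))
    -- Codazzi equation (the ambient space is flat)
    (codazzi : ∀ X Y Y', Dn X (II Y Y') - II (D X Y) Y' - II Y (D X Y')
        = Dn Y (II X Y') - II (D Y X) Y' - II X (D Y Y')) :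
    A ZP ZT = 0 ∧ D ZT ZT = 0 :=
  stmt2_general Mp T Nv g gN D II A d ZT W ZP g_symm II_symm shape metr dconst frame hZT compat1
end

section
/- Let M be a timelike surface in ℝ^{n,1} with canonical null direction Z, and let W be a lightlike tangent vector field with ⟨Z^⊤, W⟩ = -1. Set a := ⟨II(W,W), Z^⊥⟩. Then the Levi-Civita connection of M satisfies ∇_{Z^⊤}Z^⊤ = 0, ∇_{Z^⊤}W = 0, ∇_W Z^⊤ = -a Z^⊤ and ∇_W W = a W; in particular the Lie bracket satisfies [Z^⊤, W] = a Z^⊤. -/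
/-!
Differentiating the constant inner products ⟨Z^⊤, Z^⊤⟩ = ⟨W, W⟩ = 0 and ⟨Z^⊤, W⟩ = -1 along any
field X shows that ∇_X Z^⊤ = -a(X) Z^⊤ and ∇_X W = a(X) W, where a(X) = ⟨∇_X Z^⊤, W⟩ = ⟨II(X, W), Z^⊥⟩.
Symmetry of II gives a(Z^⊤) = ⟨A_{Z^⊥} W, Z^⊤⟩ = ⟨∇_W Z^⊤, Z^⊤⟩ = 0, while a(W) = ⟨II(W, W), Z^⊥⟩;
the bracket then follows from torsion-freeness.
-/

section LightlikeFrame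

variable {Mp T : Type*} (g : T → T → Mp → ℝ) (D : T → T → T) (d : T → (Mp → ℝ) → Mp → ℝ)

lemma g_covDeriv_add_g_covDeriv_eq_zero
    (metr : ∀ X Y Y', d X (g Y Y') = g (D X Y) Y' + g Y (D X Y'))
    (dconst : ∀ X (c : ℝ), d X (fun _ => c) = 0)
    {Y Y' : T} {c : ℝ} (hc : g Y Y' = fun _ => c) (X : T) :
    g (D X Y) Y' + g Y (D X Y') = 0 := by
  rw [← metr, hc, dconst]

lemma g_covDeriv_self_eq_zero
    (g_symm : ∀ X Y, g X Y = g Y X)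
    (metr : ∀ X Y Y', d X (g Y Y') = g (D X Y) Y' + g Y (D X Y'))
    (dconst : ∀ X (c : ℝ), d X (fun _ => c) = 0)
    {Y : T} {c : ℝ} (hc : g Y Y = fun _ => c) (X : T) :
    g (D X Y) Y = 0 := by
  have h := g_covDeriv_add_g_covDeriv_eq_zero g D d metr dconst hc X
  rw [g_symm Y] at h
  funext p
  have hp := congrFun h p
  simp only [Pi.add_apply, Pi.zero_apply] at hp ⊢
  linarith

lemma covDeriv_lightlikeFrame [AddCommGroup T] [Module (Mp → ℝ) T] {e f : T}
    (g_symm : ∀ X Y, g X Y = g Y X)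
    (metr : ∀ X Y Y', d X (g Y Y') = g (D X Y) Y' + g Y (D X Y'))
    (dconst : ∀ X (c : ℝ), d X (fun _ => c) = 0)
    (frame : ∀ v : T, v = (-(g v f)) • e + (-(g v e)) • f)
    (he : g e e = 0) (hf : g f f = 0) (hef : g e f = fun _ => (-1 : ℝ)) (X : T) :
    D X e = (-(g (D X e) f)) • e ∧ D X f = (g (D X e) f) • f := by
  have hee : g (D X e) e = 0 := g_covDeriv_self_eq_zero g D d g_symm metr dconst (c := 0) he X
  have hff : g (D X f) f = 0 := g_covDeriv_self_eq_zero g D d g_symm metr dconst (c := 0) hf X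
  have hfe : g (D X f) e = -g (D X e) f := by
    rw [g_symm]
    exact eq_neg_of_add_eq_zero_right (g_covDeriv_add_g_covDeriv_eq_zero g D d metr dconst hef X)
  constructor
  · exact (frame _).trans (by rw [hee]; simp)
  · exact (frame _).trans (by rw [hff, hfe]; simp)

end LightlikeFrame

theorem stmt3_general
    (Mp T Nv : Type)
    [AddCommGroup T] [Module (Mp → ℝ) T]
    -- the induced (Lorentzian) metric on tangent fields and the (Riemannian) metric on normal fields
    (g : T → T → Mp → ℝ) (gN : Nv → Nv → Mp → ℝ)
    -- Levi-Civita connection of M, normal connection, second fundamental form, shape operator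
    (D : T → T → T)
    (II : T → T → Nv) (A : Nv → T → T)
    -- action of vector fields on functions, Lie bracket, gradient
    (d : T → (Mp → ℝ) → Mp → ℝ) (lie : T → T → T)
    -- the tangent and normal parts of Z and the lightlike field W
    (ZT W : T) (ZP : Nv)
    (g_symm : ∀ X Y, g X Y = g Y X)
    (II_symm : ∀ X Y, II X Y = II Y X)
    (shape : ∀ ν X Y, g (A ν X) Y = gN (II X Y) ν)
    (metr : ∀ X Y Y', d X (g Y Y') = g (D X Y) Y' + g Y (D X Y'))
    (tors : ∀ X Y, lie X Y = D X Y - D Y X)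
    (dconst : ∀ X (c : ℝ), d X (fun _ => c) = 0)
    -- (Z^⊤, W) is a frame of lightlike tangent fields with ⟨Z^⊤, W⟩ = -1
    (frame : ∀ v : T, v = (-(g v W)) • ZT + (-(g v ZT)) • W)
    (hZT : g ZT ZT = 0)
    (hW : g W W = 0)
    (hZTW : g ZT W = fun _ => (-1 : ℝ))
    -- the compatibility equations coming from Z being a constant vector field
    (compat1 : ∀ X, D X ZT = A ZP X) :
    D ZT ZT = 0 ∧ D ZT W = 0
    ∧ D W ZT = (-(gN (II W W) ZP)) • ZT
    ∧ D W W = (gN (II W W) ZP) • W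
    ∧ lie ZT W = (gN (II W W) ZP) • ZT := by
  have hD := covDeriv_lightlikeFrame g D d g_symm metr dconst frame hZT hW hZTW
  have ha_W : g (D W ZT) W = gN (II W W) ZP := by rw [compat1, shape]
  have ha_ZT : g (D ZT ZT) W = 0 := by
    rw [compat1, shape, II_symm, ← shape, ← compat1]
    exact g_covDeriv_self_eq_zero g D d g_symm metr dconst (c := 0) hZT W
  obtain ⟨hZT_ZT, hZT_W⟩ := hD ZT
  obtain ⟨hW_ZT, hW_W⟩ := hD W
  rw [ha_ZT, neg_zero, zero_smul] at hZT_ZT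
  rw [ha_ZT, zero_smul] at hZT_W
  rw [ha_W] at hW_ZT hW_W
  refine ⟨hZT_ZT, hZT_W, hW_ZT, hW_W, ?_⟩
  rw [tors, hZT_W, hW_ZT, zero_sub, neg_smul, neg_neg]

/-- Connection identities in the lightlike frame (Z^⊤, W): with a = ⟨II(W,W), Z^⊥⟩,
∇_{Z^⊤}Z^⊤ = 0, ∇_{Z^⊤}W = 0, ∇_W Z^⊤ = -a Z^⊤, ∇_W W = a W and [Z^⊤, W] = a Z^⊤. -/
theorem stmt3
    (Mp T Nv : Type)
    [AddCommGroup T] [Module (Mp → ℝ) T]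
    [AddCommGroup Nv] [Module (Mp → ℝ) Nv]
    -- the induced (Lorentzian) metric on tangent fields and the (Riemannian) metric on normal fields
    (g : T → T → Mp → ℝ) (gN : Nv → Nv → Mp → ℝ)
    -- Levi-Civita connection of M, normal connection, second fundamental form, shape operator
    (D : T → T → T) (Dn : T → Nv → Nv)
    (II : T → T → Nv) (A : Nv → T → T)
    -- action of vector fields on functions, Lie bracket, gradient
    (d : T → (Mp → ℝ) → Mp → ℝ) (lie : T → T → T) (grad : (Mp → ℝ) → T)
    -- the tangent and normal parts of Z and the lightlike field W
    (ZT W : T) (ZP : Nv)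
    (g_symm : ∀ X Y, g X Y = g Y X)
    (gN_symm : ∀ μ ν, gN μ ν = gN ν μ)
    (gN_def : ∀ ν : Nv, gN ν ν = 0 → ν = 0)
    (II_symm : ∀ X Y, II X Y = II Y X)
    (shape : ∀ ν X Y, g (A ν X) Y = gN (II X Y) ν)
    (metr : ∀ X Y Y', d X (g Y Y') = g (D X Y) Y' + g Y (D X Y'))
    (metrN : ∀ X μ ν, d X (gN μ ν) = gN (Dn X μ) ν + gN μ (Dn X ν))
    (tors : ∀ X Y, lie X Y = D X Y - D Y X)
    (dconst : ∀ X (c : ℝ), d X (fun _ => c) = 0)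
    (grad_def : ∀ h X, g (grad h) X = d X h)
    -- (Z^⊤, W) is a frame of lightlike tangent fields with ⟨Z^⊤, W⟩ = -1
    (frame : ∀ v : T, v = (-(g v W)) • ZT + (-(g v ZT)) • W)
    (hZT : g ZT ZT = 0) (hZTne : ZT ≠ 0)
    (hW : g W W = 0) (hWne : W ≠ 0)
    (hZTW : g ZT W = fun _ => (-1 : ℝ))
    -- Z is unit spacelike, so Z^⊥ is a unit normal field
    (hZP : gN ZP ZP = fun _ => (1 : ℝ))
    -- the compatibility equations coming from Z being a constant vector field
    (compat1 : ∀ X, D X ZT = A ZP X)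
    (compat2 : ∀ X, Dn X ZP = -(II ZT X))
    -- Codazzi equation (the ambient space is flat)
    (codazzi : ∀ X Y Y', Dn X (II Y Y') - II (D X Y) Y' - II Y (D X Y')
        = Dn Y (II X Y') - II (D Y X) Y' - II X (D Y Y')) :
    D ZT ZT = 0 ∧ D ZT W = 0
    ∧ D W ZT = (-(gN (II W W) ZP)) • ZT
    ∧ D W W = (gN (II W W) ZP) • W
    ∧ lie ZT W = (gN (II W W) ZP) • ZT :=
  stmt3_general Mp T Nv g gN D II A d lie ZT W ZP g_symm II_symm shape metr tors dconst frame hZT hW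
    hZTW compat1
end

section
/- Let M be a timelike surface in ℝ^{n,1} with a canonical null direction. If the mean curvature vector H is parallel in the normal bundle (∇^⊥ H = 0), then M is minimal, i.e. H = 0. -/
/-!
Since `Z` is a constant unit spacelike vector, its normal part satisfies `∇^⊥_X Z^⊥ = -II(Z^⊤, X)`,
so `H = -II(Z^⊤, W) = ∇^⊥_W Z^⊥` is orthogonal to `Z^⊥` (which has constant length).
Differentiating `⟨H, Z^⊥⟩ = 0` along `W` gives `|H|² = -⟨∇^⊥_W H, Z^⊥⟩`, which vanishes when
`H` is parallel; definiteness of the normal metric then forces `H = 0`.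
-/

variable {R T Nv : Type*}

theorem eq_zero_of_frame_pairings_eq_zero [Ring R] [AddCommGroup T] [Module R T]
    {g : T → T → R} {Z W : T}
    (frame : ∀ v : T, v = (-(g v W)) • Z + (-(g v Z)) • W) {v : T}
    (hW : g v W = 0) (hZ : g v Z = 0) : v = 0 := by
  rw [frame v, hW, hZ]
  simp

/-- `grad 0` pairs to zero with everything, so the frame expansion makes it the zero field. -/
theorem pairing_zero_left [Ring R] [AddCommGroup T] [Module R T]
    {g : T → T → R} {Z W : T} {d : T → R → R} {grad : R → T}
    (frame : ∀ v : T, v = (-(g v W)) • Z + (-(g v Z)) • W)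
    (grad_def : ∀ h X, g (grad h) X = d X h) (d_zero : ∀ X, d X 0 = 0) (X : T) :
    g 0 X = 0 := by
  have hgrad : ∀ Y, g (grad 0) Y = 0 := fun Y => (grad_def 0 Y).trans (d_zero Y)
  have hgrad_zero : grad 0 = 0 := eq_zero_of_frame_pairings_eq_zero frame (hgrad W) (hgrad Z)
  simpa [hgrad_zero] using hgrad X

theorem normalPairing_zero_left [Zero R] [Zero T] [Zero Nv] {g : T → T → R} {gN : Nv → Nv → R}
    {II : T → T → Nv} {A : Nv → T → T}
    (hg : ∀ X, g X 0 = 0) (shape : ∀ ν X Y, g (A ν X) Y = gN (II X Y) ν)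
    (gN_def : ∀ ν : Nv, gN ν ν = 0 → ν = 0) (ν : Nv) : gN 0 ν = 0 := by
  have hII : ∀ μ, gN (II 0 0) μ = 0 := fun μ => (shape μ 0 0).symm.trans (hg _)
  have hII_zero : II 0 0 = 0 := gN_def _ (hII _)
  simpa [hII_zero] using hII ν

theorem normalPairing_covDeriv_self_eq_zero [AddCommGroup R] [IsAddTorsionFree R]
    {gN : Nv → Nv → R} {d : T → R → R} {Dn : T → Nv → Nv}
    (gN_symm : ∀ μ ν, gN μ ν = gN ν μ)
    (metrN : ∀ X μ ν, d X (gN μ ν) = gN (Dn X μ) ν + gN μ (Dn X ν))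
    {X : T} {ν : Nv} (hν : d X (gN ν ν) = 0) : gN (Dn X ν) ν = 0 := by
  rw [metrN, gN_symm ν] at hν
  exact two_nsmul_eq_zero.mp ((two_nsmul _).trans hν)

theorem normalPairing_self_eq_of_covDeriv_eq [AddCommGroup R] {gN : Nv → Nv → R} {d : T → R → R}
    {Dn : T → Nv → Nv} (metrN : ∀ X μ ν, d X (gN μ ν) = gN (Dn X μ) ν + gN μ (Dn X ν))
    {W : T} {H ν : Nv} (hH : Dn W ν = H) :
    gN H H = d W (gN H ν) - gN (Dn W H) ν := by
  rw [metrN, hH]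
  abel

theorem stmt7_general
    (Mp T Nv : Type)
    [AddCommGroup T] [Module (Mp → ℝ) T]
    [AddCommGroup Nv] [Module (Mp → ℝ) Nv]
    -- the induced (Lorentzian) metric on tangent fields and the (Riemannian) metric on normal fields
    (g : T → T → Mp → ℝ) (gN : Nv → Nv → Mp → ℝ)
    -- Levi-Civita connection of M, normal connection, second fundamental form, shape operator
    (Dn : T → Nv → Nv)
    (II : T → T → Nv) (A : Nv → T → T)
    -- action of vector fields on functions, Lie bracket, gradient
    (d : T → (Mp → ℝ) → Mp → ℝ) (grad : (Mp → ℝ) → T)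
    -- the tangent and normal parts of Z and the lightlike field W
    (ZT W : T) (ZP : Nv)
    (g_symm : ∀ X Y, g X Y = g Y X)
    (gN_symm : ∀ μ ν, gN μ ν = gN ν μ)
    (gN_def : ∀ ν : Nv, gN ν ν = 0 → ν = 0)
    (shape : ∀ ν X Y, g (A ν X) Y = gN (II X Y) ν)
    (metrN : ∀ X μ ν, d X (gN μ ν) = gN (Dn X μ) ν + gN μ (Dn X ν))
    (dconst : ∀ X (c : ℝ), d X (fun _ => c) = 0)
    (grad_def : ∀ h X, g (grad h) X = d X h)
    -- (Z^⊤, W) is a frame of lightlike tangent fields with ⟨Z^⊤, W⟩ = -1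
    (frame : ∀ v : T, v = (-(g v W)) • ZT + (-(g v ZT)) • W)
    -- Z is unit spacelike, so Z^⊥ is a unit normal field
    (hZP : gN ZP ZP = fun _ => (1 : ℝ))
    -- the compatibility equations coming from Z being a constant vector field
    (compat2 : ∀ X, Dn X ZP = -(II ZT X))
    (hpar : ∀ X, Dn X (-(II ZT W)) = 0) :
    -(II ZT W) = (0 : Nv) := by
  have d_zero : ∀ X, d X 0 = 0 := fun X => dconst X 0
  have hg : ∀ X, g X 0 = 0 := fun X =>
    (g_symm X 0).trans (pairing_zero_left frame grad_def d_zero X)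
  have hH : Dn W ZP = -(II ZT W) := compat2 W
  have horth : gN (-(II ZT W)) ZP = 0 := by
    rw [← hH]
    exact normalPairing_covDeriv_self_eq_zero gN_symm metrN (by rw [hZP]; exact dconst W 1)
  have hnorm := normalPairing_self_eq_of_covDeriv_eq metrN hH
  rw [horth, hpar W, normalPairing_zero_left hg shape gN_def, d_zero, sub_zero] at hnorm
  exact gN_def _ hnorm

/-- If the mean curvature vector H = -II(Z^⊤,W) is parallel in the normal bundle,
then the surface is minimal: H = 0. -/
theorem stmt7
    (Mp T Nv : Type)
    [AddCommGroup T] [Module (Mp → ℝ) T]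
    [AddCommGroup Nv] [Module (Mp → ℝ) Nv]
    -- the induced (Lorentzian) metric on tangent fields and the (Riemannian) metric on normal fields
    (g : T → T → Mp → ℝ) (gN : Nv → Nv → Mp → ℝ)
    -- Levi-Civita connection of M, normal connection, second fundamental form, shape operator
    (D : T → T → T) (Dn : T → Nv → Nv)
    (II : T → T → Nv) (A : Nv → T → T)
    -- action of vector fields on functions, Lie bracket, gradient
    (d : T → (Mp → ℝ) → Mp → ℝ) (lie : T → T → T) (grad : (Mp → ℝ) → T)
    -- the tangent and normal parts of Z and the lightlike field W
    (ZT W : T) (ZP : Nv)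
    (g_symm : ∀ X Y, g X Y = g Y X)
    (gN_symm : ∀ μ ν, gN μ ν = gN ν μ)
    (gN_def : ∀ ν : Nv, gN ν ν = 0 → ν = 0)
    (II_symm : ∀ X Y, II X Y = II Y X)
    (shape : ∀ ν X Y, g (A ν X) Y = gN (II X Y) ν)
    (metr : ∀ X Y Y', d X (g Y Y') = g (D X Y) Y' + g Y (D X Y'))
    (metrN : ∀ X μ ν, d X (gN μ ν) = gN (Dn X μ) ν + gN μ (Dn X ν))
    (tors : ∀ X Y, lie X Y = D X Y - D Y X)
    (dconst : ∀ X (c : ℝ), d X (fun _ => c) = 0)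
    (grad_def : ∀ h X, g (grad h) X = d X h)
    -- (Z^⊤, W) is a frame of lightlike tangent fields with ⟨Z^⊤, W⟩ = -1
    (frame : ∀ v : T, v = (-(g v W)) • ZT + (-(g v ZT)) • W)
    (hZT : g ZT ZT = 0) (hZTne : ZT ≠ 0)
    (hW : g W W = 0) (hWne : W ≠ 0)
    (hZTW : g ZT W = fun _ => (-1 : ℝ))
    -- Z is unit spacelike, so Z^⊥ is a unit normal field
    (hZP : gN ZP ZP = fun _ => (1 : ℝ))
    -- the compatibility equations coming from Z being a constant vector field
    (compat1 : ∀ X, D X ZT = A ZP X)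
    (compat2 : ∀ X, Dn X ZP = -(II ZT X))
    -- Codazzi equation (the ambient space is flat)
    (codazzi : ∀ X Y Y', Dn X (II Y Y') - II (D X Y) Y' - II Y (D X Y')
        = Dn Y (II X Y') - II (D Y X) Y' - II X (D Y Y'))
    (hpar : ∀ X, Dn X (-(II ZT W)) = 0) :
    -(II ZT W) = (0 : Nv) :=
  stmt7_general Mp T Nv g gN Dn II A d grad ZT W ZP g_symm gN_symm gN_def shape metrN dconst
    grad_def frame hZP compat2 hpar
end

section
/- Let M be a timelike surface in ℝ^{n,1} with canonical null direction Z. Then the normal vector field Z^⊥ is parallel in the normal bundle if and only if M is minimal and II(Z^⊤, Z^⊤) = 0. -/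
/-!
The normal derivative of `Z^⊥` is `-II(Z^⊤, ·)`, so `Z^⊥` is parallel exactly when `II(Z^⊤, ·)`
vanishes. For the converse direction one passes to the shape operator: `⟨A_ν Z^⊤, Y⟩ = ⟨II(Z^⊤, Y), ν⟩`
vanishes for `Y = W` and `Y = Z^⊤`, so `A_ν Z^⊤ = 0` by the lightlike frame; taking
`ν = II(Z^⊤, X)` gives `|II(Z^⊤, X)|² = ⟨A_ν Z^⊤, X⟩ = 0`.
-/

section FrameAndShape

variable {R T N : Type*} [Ring R] [AddCommGroup T] [Zero N]
  {g : T → T → R} {gN : N → N → R} {II : T → T → N} {A : N → T → T} {ZT W : T}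

theorem normalInner_zero_left (shape : ∀ ν X Y, g (A ν X) Y = gN (II X Y) ν)
    (gN_def : ∀ ν : N, gN ν ν = 0 → ν = 0) (hg : ∀ X, g X 0 = 0) (ν : N) : gN 0 ν = 0 := by
  have hII : ∀ μ, gN (II 0 0) μ = 0 := fun μ => (shape μ 0 0).symm.trans (hg _)
  rw [← gN_def _ (hII _), hII]

variable [Module R T]

theorem eq_zero_of_frame (frame : ∀ v : T, v = (-(g v W)) • ZT + (-(g v ZT)) • W) {v : T}
    (hW : g v W = 0) (hZT : g v ZT = 0) : v = 0 := by
  rw [frame v, hW, hZT]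
  simp

-- Neither metric is assumed additive, so even `g 0 X = 0` needs an argument.
theorem inner_zero_left_of_grad {d : T → R → R} {grad : R → T}
    (frame : ∀ v : T, v = (-(g v W)) • ZT + (-(g v ZT)) • W)
    (grad_def : ∀ h X, g (grad h) X = d X h) (hd : ∀ X, d X 0 = 0) (X : T) : g 0 X = 0 := by
  have hgrad : ∀ Y, g (grad 0) Y = 0 := fun Y => (grad_def 0 Y).trans (hd Y)
  have grad_zero : grad 0 = 0 := eq_zero_of_frame frame (hgrad W) (hgrad ZT)
  rw [← grad_zero, hgrad]

theorem shape_frame_eq_zero (frame : ∀ v : T, v = (-(g v W)) • ZT + (-(g v ZT)) • W)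
    (shape : ∀ ν X Y, g (A ν X) Y = gN (II X Y) ν) (hgN : ∀ ν, gN 0 ν = 0)
    (hW : II ZT W = 0) (hZT : II ZT ZT = 0) (ν : N) : A ν ZT = 0 :=
  eq_zero_of_frame frame (by rw [shape, hW, hgN]) (by rw [shape, hZT, hgN])

theorem secondFundamentalForm_eq_zero_iff (frame : ∀ v : T, v = (-(g v W)) • ZT + (-(g v ZT)) • W)
    (shape : ∀ ν X Y, g (A ν X) Y = gN (II X Y) ν) (gN_def : ∀ ν : N, gN ν ν = 0 → ν = 0)
    (hg : ∀ X, g 0 X = 0) (hgN : ∀ ν, gN 0 ν = 0) :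
    (∀ X, II ZT X = 0) ↔ II ZT W = 0 ∧ II ZT ZT = 0 := by
  refine ⟨fun h => ⟨h W, h ZT⟩, fun ⟨hW, hZT⟩ X => gN_def _ ?_⟩
  rw [← shape, shape_frame_eq_zero frame shape hgN hW hZT, hg]

end FrameAndShape

theorem stmt9_general
    (Mp T Nv : Type)
    [AddCommGroup T] [Module (Mp → ℝ) T]
    [AddCommGroup Nv]
    -- the induced (Lorentzian) metric on tangent fields and the (Riemannian) metric on normal fields
    (g : T → T → Mp → ℝ) (gN : Nv → Nv → Mp → ℝ)
    -- Levi-Civita connection of M, normal connection, second fundamental form, shape operator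
    (Dn : T → Nv → Nv)
    (II : T → T → Nv) (A : Nv → T → T)
    -- action of vector fields on functions, Lie bracket, gradient
    (d : T → (Mp → ℝ) → Mp → ℝ) (grad : (Mp → ℝ) → T)
    -- the tangent and normal parts of Z and the lightlike field W
    (ZT W : T) (ZP : Nv)
    (g_symm : ∀ X Y, g X Y = g Y X)
    (gN_def : ∀ ν : Nv, gN ν ν = 0 → ν = 0)
    (shape : ∀ ν X Y, g (A ν X) Y = gN (II X Y) ν)
    (dconst : ∀ X (c : ℝ), d X (fun _ => c) = 0)
    (grad_def : ∀ h X, g (grad h) X = d X h)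
    -- (Z^⊤, W) is a frame of lightlike tangent fields with ⟨Z^⊤, W⟩ = -1
    (frame : ∀ v : T, v = (-(g v W)) • ZT + (-(g v ZT)) • W)
    -- the compatibility equations coming from Z being a constant vector field
    (compat2 : ∀ X, Dn X ZP = -(II ZT X)) :
    (∀ X, Dn X ZP = 0) ↔ (-(II ZT W) = (0 : Nv) ∧ II ZT ZT = 0) := by
  have hg : ∀ X, g 0 X = 0 := inner_zero_left_of_grad frame grad_def (fun X => dconst X 0)
  have hgN : ∀ ν, gN 0 ν = 0 :=
    normalInner_zero_left shape gN_def (fun X => (g_symm X 0).trans (hg X))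
  simp only [compat2, neg_eq_zero]
  exact secondFundamentalForm_eq_zero_iff frame shape gN_def hg hgN

/-- Z^⊥ is parallel in the normal bundle iff M is minimal (H = -II(Z^⊤,W) = 0)
and II(Z^⊤,Z^⊤) = 0. -/
theorem stmt9
    (Mp T Nv : Type)
    [AddCommGroup T] [Module (Mp → ℝ) T]
    [AddCommGroup Nv] [Module (Mp → ℝ) Nv]
    -- the induced (Lorentzian) metric on tangent fields and the (Riemannian) metric on normal fields
    (g : T → T → Mp → ℝ) (gN : Nv → Nv → Mp → ℝ)
    -- Levi-Civita connection of M, normal connection, second fundamental form, shape operator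
    (D : T → T → T) (Dn : T → Nv → Nv)
    (II : T → T → Nv) (A : Nv → T → T)
    -- action of vector fields on functions, Lie bracket, gradient
    (d : T → (Mp → ℝ) → Mp → ℝ) (lie : T → T → T) (grad : (Mp → ℝ) → T)
    -- the tangent and normal parts of Z and the lightlike field W
    (ZT W : T) (ZP : Nv)
    (g_symm : ∀ X Y, g X Y = g Y X)
    (gN_symm : ∀ μ ν, gN μ ν = gN ν μ)
    (gN_def : ∀ ν : Nv, gN ν ν = 0 → ν = 0)
    (II_symm : ∀ X Y, II X Y = II Y X)
    (shape : ∀ ν X Y, g (A ν X) Y = gN (II X Y) ν)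
    (metr : ∀ X Y Y', d X (g Y Y') = g (D X Y) Y' + g Y (D X Y'))
    (metrN : ∀ X μ ν, d X (gN μ ν) = gN (Dn X μ) ν + gN μ (Dn X ν))
    (tors : ∀ X Y, lie X Y = D X Y - D Y X)
    (dconst : ∀ X (c : ℝ), d X (fun _ => c) = 0)
    (grad_def : ∀ h X, g (grad h) X = d X h)
    -- (Z^⊤, W) is a frame of lightlike tangent fields with ⟨Z^⊤, W⟩ = -1
    (frame : ∀ v : T, v = (-(g v W)) • ZT + (-(g v ZT)) • W)
    (hZT : g ZT ZT = 0) (hZTne : ZT ≠ 0)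
    (hW : g W W = 0) (hWne : W ≠ 0)
    (hZTW : g ZT W = fun _ => (-1 : ℝ))
    -- Z is unit spacelike, so Z^⊥ is a unit normal field
    (hZP : gN ZP ZP = fun _ => (1 : ℝ))
    -- the compatibility equations coming from Z being a constant vector field
    (compat1 : ∀ X, D X ZT = A ZP X)
    (compat2 : ∀ X, Dn X ZP = -(II ZT X))
    -- Codazzi equation (the ambient space is flat)
    (codazzi : ∀ X Y Y', Dn X (II Y Y') - II (D X Y) Y' - II Y (D X Y')
        = Dn Y (II X Y') - II (D Y X) Y' - II X (D Y Y')) :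
    (∀ X, Dn X ZP = 0) ↔ (-(II ZT W) = (0 : Nv) ∧ II ZT ZT = 0) :=
  stmt9_general Mp T Nv g gN Dn II A d grad ZT W ZP g_symm gN_def shape dconst grad_def frame
    compat2
end

section
/- Let M ⊂ ℝ^{3,1} be the timelike graph surface ψ(x,y) = (f(x,y), g(x,y), x, y) (so EG - F² < 0). Then the tangent part of the constant vector e₄ = (0,0,0,1) satisfies ⟨e₄^⊤, e₄^⊤⟩ = E/(EG - F²). Consequently M has a canonical null direction with respect to e₄ if and only if ψ_x is lightlike (E = 0), in which case e₄^⊤ = (1/F)ψ_x. -/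
/-!
Write e₄^⊤ = aψ_x + bψ_y. The projection conditions say aE + bF = 0 and aF + bG = 1, so
⟨e₄^⊤, e₄^⊤⟩ = a·0 + b·1 = b, and eliminating a gives b(EG - F²) = E. Hence e₄^⊤ is null iff
E = 0, and then b = 0, aF = 1. It is never zero, since ⟨e₄^⊤, ψ_y⟩ = 1. All of this holds for
any symmetric bilinear form.
-/

section TangentProjection

variable {K V : Type*} [Field K] [AddCommGroup V] [Module K V] {B : LinearMap.BilinForm K V}
  {u v t : V} {a b : K}

theorem apply_self_eq_of_tangentProj (ht : t = a • u + b • v) (htu : B t u = 0)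
    (htv : B t v = 1) : B t t = b := by
  nth_rewrite 2 [ht]
  simp only [map_add, map_smul, smul_eq_mul, htu, htv]
  ring

theorem mul_gram_det_eq_of_tangentProj (hB : B.IsSymm) (ht : t = a • u + b • v)
    (htu : B t u = 0) (htv : B t v = 1) :
    b * (B u u * B v v - B u v ^ 2) = B u u := by
  have hu : a * B u u + b * B u v = 0 := by
    rw [← htu, ht]; simp [hB.eq v u]
  have hv : a * B u v + b * B v v = 1 := by
    rw [← htv, ht]; simp
  linear_combination B u u * hv - B u v * hu

theorem apply_self_eq_div_of_tangentProj (hB : B.IsSymm) (ht : t = a • u + b • v)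
    (htu : B t u = 0) (htv : B t v = 1) (hD : B u u * B v v - B u v ^ 2 ≠ 0) :
    B t t = B u u / (B u u * B v v - B u v ^ 2) := by
  rw [apply_self_eq_of_tangentProj ht htu htv, eq_div_iff hD,
    mul_gram_det_eq_of_tangentProj hB ht htu htv]

theorem ne_zero_of_apply_eq_one (htv : B t v = 1) : t ≠ 0 := by
  rintro rfl
  simp at htv

theorem eq_inv_smul_of_tangentProj (hB : B.IsSymm) (ht : t = a • u + b • v)
    (htu : B t u = 0) (htv : B t v = 1) (hD : B u u * B v v - B u v ^ 2 ≠ 0)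
    (hu : B u u = 0) : t = (B u v)⁻¹ • u := by
  have hb : b = 0 := by
    have h := (mul_gram_det_eq_of_tangentProj hB ht htu htv).trans hu
    exact (mul_eq_zero.mp h).resolve_right hD
  have ha : a * B u v = 1 := by
    rw [← htv, ht, hb]; simp
  rw [ht, hb, zero_smul, add_zero, eq_inv_of_mul_eq_one_left ha]

theorem ne_zero_and_apply_self_eq_zero_iff_of_tangentProj (hB : B.IsSymm)
    (ht : t = a • u + b • v) (htu : B t u = 0) (htv : B t v = 1)
    (hD : B u u * B v v - B u v ^ 2 ≠ 0) :
    (t ≠ 0 ∧ B t t = 0) ↔ B u u = 0 := by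
  rw [apply_self_eq_div_of_tangentProj hB ht htu htv hD, div_eq_zero_iff, or_iff_left hD]
  exact and_iff_right (ne_zero_of_apply_eq_one htv)

end TangentProjection

def minkowski : LinearMap.BilinForm ℝ (Fin 4 → ℝ) :=
  Matrix.toBilin' (Matrix.diagonal ![-1, 1, 1, 1])

theorem minkowski_apply (u v : Fin 4 → ℝ) :
    minkowski u v = -(u 0 * v 0) + u 1 * v 1 + u 2 * v 2 + u 3 * v 3 := by
  simp [minkowski, Matrix.toBilin'_apply', dotProduct, Fin.sum_univ_four, Matrix.mulVec,
    Matrix.diagonal]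

theorem minkowski_isSymm : minkowski.IsSymm :=
  ⟨fun u v => by simp only [minkowski_apply]; ring⟩

/-- For the timelike graph surface ψ(x,y) = (f,g,x,y) in ℝ^{3,1} (EG - F² < 0), the
tangent part e₄^⊤ of e₄ = (0,0,0,1) satisfies ⟨e₄^⊤,e₄^⊤⟩ = E/(EG-F²); hence e₄
defines a canonical null direction (e₄^⊤ lightlike, i.e. nonzero of null norm) iff
ψ_x is lightlike (E = 0), and in that case e₄^⊤ = (1/F)ψ_x. -/
theorem stmt14
    (m : (Fin 4 → ℝ) → (Fin 4 → ℝ) → ℝ)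
    (hm : ∀ u v, m u v = -(u 0 * v 0) + u 1 * v 1 + u 2 * v 2 + u 3 * v 3)
    (fx fy gx gy : ℝ)
    (px py e4 : Fin 4 → ℝ)
    (hpx : px = ![fx, gx, 1, 0]) (hpy : py = ![fy, gy, 0, 1])
    (he4 : e4 = ![0, 0, 0, 1])
    (E F G : ℝ)
    (hE : E = m px px) (hF : F = m px py) (hG : G = m py py)
    (htimelike : E * G - F ^ 2 < 0)
    (e4T : Fin 4 → ℝ) (a b : ℝ)
    (he4T : e4T = a • px + b • py)
    (hproj1 : m e4T px = m e4 px) (hproj2 : m e4T py = m e4 py) :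
    m e4T e4T = E / (E * G - F ^ 2)
    ∧ ((e4T ≠ 0 ∧ m e4T e4T = 0) ↔ E = 0)
    ∧ (E = 0 → e4T = F⁻¹ • px) := by
  obtain rfl : m = fun u v => minkowski u v := by
    funext u v
    rw [hm, minkowski_apply]
  beta_reduce at hproj1 hproj2 htimelike
  subst hE hF hG
  have htu : minkowski e4T px = 0 := by
    rw [hproj1, he4, hpx, minkowski_apply]; simp
  have htv : minkowski e4T py = 1 := by
    rw [hproj2, he4, hpy, minkowski_apply]; simp
  have hD := htimelike.ne
  exact ⟨apply_self_eq_div_of_tangentProj minkowski_isSymm he4T htu htv hD,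
    ne_zero_and_apply_self_eq_zero_iff_of_tangentProj minkowski_isSymm he4T htu htv hD,
    eq_inv_smul_of_tangentProj minkowski_isSymm he4T htu htv hD⟩
end

section
/- In the setting of the Gauss map of an oriented timelike surface M ⊂ ℝ^{3,1} with canonical null direction and II(Z^⊤,Z^⊤) ≠ 0, the complex quadratic form G*H (pull-back by the Gauss map of H(η,η') = ⟨η,η'⟩ + i η∧η') satisfies H(dG(Z^⊤),dG(Z^⊤)) = -2|II(Z^⊤,Z^⊤)|⟨H,ν⟩, H(dG(W),dG(W)) = -2(⟨H,ν⟩/|II(Z^⊤,Z^⊤)|)(|H|² - K - iK_N), and H(dG(Z^⊤),dG(W)) = (2|H|² - K) - iK_N. Consequently the discriminant -det(G*H) equals -(K + iK_N)², and G*H vanishes identically iff M is minimal with flat normal bundle. -/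
/-!
In the null frame `(N₁, N₂)` of isotropic vectors, a symmetric bilinear form is
`H(x₁N₁ + x₂N₂, y₁N₁ + y₂N₂) = (x₁y₂ + x₂y₁) H(N₁,N₂)`, so the three values of `G*H` are read
off from the frame coefficients of `dG(Z^⊤)` and `dG(W)`, and the discriminant
`H(u,v)² - H(u,u)H(v,v) = (H(N₁,N₂)(x₁y₂ - x₂y₁))²` is the square of the coefficient
determinant, which equals `K + iK_N`.
-/

namespace LinearMap.BilinForm

variable {R B : Type*} [CommRing R] [AddCommGroup B] [Module R B]

def ofSymmLeft (H : B → B → R) (symm : ∀ x y, H x y = H y x)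
    (add_left : ∀ x y z, H (x + y) z = H x z + H y z)
    (smul_left : ∀ (c : R) x y, H (c • x) y = c * H x y) : LinearMap.BilinForm R B :=
  LinearMap.mk₂ R H add_left (fun c x y => by rw [smul_left, smul_eq_mul])
    (fun x y z => by rw [symm, add_left, symm y, symm z])
    (fun c x y => by rw [symm, smul_left, symm, smul_eq_mul])

@[simp]
theorem ofSymmLeft_apply (H : B → B → R) (symm : ∀ x y, H x y = H y x)
    (add_left : ∀ x y z, H (x + y) z = H x z + H y z)
    (smul_left : ∀ (c : R) x y, H (c • x) y = c * H x y) (x y : B) :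
    ofSymmLeft H symm add_left smul_left x y = H x y :=
  rfl

variable {H : LinearMap.BilinForm R B} {N₁ N₂ : B}

theorem apply_add_smul_of_isotropic (hH : H.IsSymm) (h₁ : H N₁ N₁ = 0) (h₂ : H N₂ N₂ = 0)
    (x₁ x₂ y₁ y₂ : R) :
    H (x₁ • N₁ + x₂ • N₂) (y₁ • N₁ + y₂ • N₂) = (x₁ * y₂ + x₂ * y₁) * H N₁ N₂ := by
  simp only [map_add, map_smul, LinearMap.add_apply, LinearMap.smul_apply, smul_eq_mul, h₁, h₂,
    hH.eq N₂ N₁]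
  ring

theorem sq_apply_sub_mul_apply_of_isotropic (hH : H.IsSymm) (h₁ : H N₁ N₁ = 0)
    (h₂ : H N₂ N₂ = 0) (x₁ x₂ y₁ y₂ : R) :
    H (x₁ • N₁ + x₂ • N₂) (y₁ • N₁ + y₂ • N₂) ^ 2
        - H (x₁ • N₁ + x₂ • N₂) (x₁ • N₁ + x₂ • N₂) * H (y₁ • N₁ + y₂ • N₂) (y₁ • N₁ + y₂ • N₂)
      = (H N₁ N₂ * (x₁ * y₂ - x₂ * y₁)) ^ 2 := by
  simp only [apply_add_smul_of_isotropic hH h₁ h₂]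
  ring

end LinearMap.BilinForm

namespace GaussMap

open Complex

variable (n m K KN : ℝ)

theorem form_Z_Z : -(I * n * -(I * m) + -(I * m) * (I * n)) = ((-2 * n * m : ℝ) : ℂ) := by
  push_cast
  linear_combination (2 * (n : ℂ) * m) * I_sq

theorem form_W_W :
    -(-(I * m) * (((KN / n : ℝ) : ℂ) + I * ((m ^ 2 - K) / n : ℝ))
        + (((KN / n : ℝ) : ℂ) + I * ((m ^ 2 - K) / n : ℝ)) * -(I * m))
      = -2 * ((m / n : ℝ) : ℂ) * (((m ^ 2 - K : ℝ) : ℂ) - I * KN) := by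
  push_cast
  linear_combination (2 * (m : ℂ) * (m ^ 2 - K) / n) * I_sq

variable {n}

theorem form_Z_W (hn : n ≠ 0) :
    -(I * n * (((KN / n : ℝ) : ℂ) + I * ((m ^ 2 - K) / n : ℝ)) + -(I * m) * -(I * m))
      = ((2 * m ^ 2 - K : ℝ) : ℂ) - I * KN := by
  push_cast
  field_simp [ofReal_ne_zero.mpr hn]
  linear_combination (-(2 * (m : ℂ) ^ 2 - K)) * I_sq

theorem coeff_det (hn : n ≠ 0) :
    I * n * (((KN / n : ℝ) : ℂ) + I * ((m ^ 2 - K) / n : ℝ)) - -(I * m) * -(I * m)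
      = K + I * KN := by
  push_cast
  field_simp [ofReal_ne_zero.mpr hn]
  linear_combination (-(K : ℂ)) * I_sq

theorem form_eq_zero_iff {Mp : Type*} {nII mH K KN : Mp → ℝ} (hnII : ∀ p, 0 < nII p)
    (hflat : KN = 0 → K = 0) :
    ((fun p => ((-2 * nII p * mH p : ℝ) : ℂ)) = 0
        ∧ (fun p => ((2 * mH p ^ 2 - K p : ℝ) : ℂ) - I * KN p) = 0
        ∧ (fun p => -2 * ((mH p / nII p : ℝ) : ℂ) * (((mH p ^ 2 - K p : ℝ) : ℂ) - I * KN p)) = 0)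
      ↔ mH = 0 ∧ KN = 0 := by
  constructor
  · rintro ⟨hZZ, hZW, -⟩
    rw [funext_iff] at hZZ hZW
    have hmH : mH = 0 := funext fun p => by simpa [(hnII p).ne'] using hZZ p
    exact ⟨hmH, funext fun p => by simpa [hmH] using congrArg im (hZW p)⟩
  · rintro ⟨rfl, rfl⟩
    obtain rfl := hflat rfl
    refine ⟨?_, ?_, ?_⟩ <;> funext p <;> simp

end GaussMap

theorem stmt19_general (Mp : Type) (B : Type) [AddCommGroup B] [Module (Mp → ℂ) B]
    (Hc : B → B → Mp → ℂ)
    (Hc_symm : ∀ x y, Hc x y = Hc y x)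
    (Hc_addl : ∀ x y z, Hc (x + y) z = Hc x z + Hc y z)
    (Hc_smull : ∀ (c : Mp → ℂ) (x y : B), Hc (c • x) y = c * Hc x y)
    (N1 N2 : B)
    (h11 : Hc N1 N1 = 0) (h22 : Hc N2 N2 = 0)
    (h12 : Hc N1 N2 = fun _ => (-1 : ℂ))
    (nII mH hsq K KN : Mp → ℝ)
    (hnII : ∀ p, 0 < nII p)
    (hsqdef : hsq = mH ^ 2)
    (hflat : KN = 0 → K = 0)
    (dGZ dGW : B)
    (hdGZ : dGZ = ((fun p => Complex.I * (nII p : ℂ)) • N1)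
        - ((fun p => Complex.I * (mH p : ℂ)) • N2))
    (hdGW : dGW = (-((fun p => Complex.I * (mH p : ℂ)) • N1))
        + ((fun p => ((KN p / nII p : ℝ) : ℂ)
            + Complex.I * ((hsq p - K p) / nII p : ℝ)) • N2)) :
    Hc dGZ dGZ = (fun p => ((-2 * nII p * mH p : ℝ) : ℂ))
    ∧ Hc dGW dGW
        = (fun p => -2 * ((mH p / nII p : ℝ) : ℂ)
            * (((hsq p - K p : ℝ) : ℂ) - Complex.I * (KN p : ℂ)))
    ∧ Hc dGZ dGW = (fun p => ((2 * hsq p - K p : ℝ) : ℂ) - Complex.I * (KN p : ℂ))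
    ∧ -((Hc dGZ dGW) ^ 2 - Hc dGZ dGZ * Hc dGW dGW)
        = (fun p => -((K p : ℂ) + Complex.I * (KN p : ℂ)) ^ 2)
    ∧ ((Hc dGZ dGZ = 0 ∧ Hc dGZ dGW = 0 ∧ Hc dGW dGW = 0) ↔ (mH = 0 ∧ KN = 0)) := by
  subst hsqdef
  have hG : (LinearMap.BilinForm.ofSymmLeft Hc Hc_symm Hc_addl Hc_smull).IsSymm := ⟨Hc_symm⟩
  have hframe : ∀ x₁ x₂ y₁ y₂ : Mp → ℂ,
      Hc (x₁ • N1 + x₂ • N2) (y₁ • N1 + y₂ • N2) = -(x₁ * y₂ + x₂ * y₁) := fun x₁ x₂ y₁ y₂ => by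
    have := LinearMap.BilinForm.apply_add_smul_of_isotropic hG h11 h22 x₁ x₂ y₁ y₂
    simp only [LinearMap.BilinForm.ofSymmLeft_apply, h12] at this
    rw [this]; funext p; simp
  set ζ : Mp → ℂ := fun p => Complex.I * (nII p : ℂ)
  set μ : Mp → ℂ := fun p => Complex.I * (mH p : ℂ)
  set ω : Mp → ℂ := fun p =>
    ((KN p / nII p : ℝ) : ℂ) + Complex.I * (((mH ^ 2) p - K p) / nII p : ℝ)
  have hZ : dGZ = ζ • N1 + (-μ) • N2 := by rw [hdGZ, neg_smul, sub_eq_add_neg]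
  have hW : dGW = (-μ) • N1 + ω • N2 := by rw [hdGW, neg_smul]
  have eZZ : Hc dGZ dGZ = fun p => ((-2 * nII p * mH p : ℝ) : ℂ) := by
    rw [hZ, hframe]; exact funext fun p => GaussMap.form_Z_Z _ _
  have eWW : Hc dGW dGW = fun p => -2 * ((mH p / nII p : ℝ) : ℂ)
      * (((mH p ^ 2 - K p : ℝ) : ℂ) - Complex.I * KN p) := by
    rw [hW, hframe]; exact funext fun p => GaussMap.form_W_W _ _ _ _
  have eZW : Hc dGZ dGW = fun p => ((2 * mH p ^ 2 - K p : ℝ) : ℂ) - Complex.I * KN p := by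
    rw [hZ, hW, hframe]; exact funext fun p => GaussMap.form_Z_W _ _ _ (hnII p).ne'
  have hdet : ζ * ω - (-μ) * (-μ) = fun p => (K p : ℂ) + Complex.I * KN p :=
    funext fun p => GaussMap.coeff_det _ _ _ (hnII p).ne'
  have hdisc := LinearMap.BilinForm.sq_apply_sub_mul_apply_of_isotropic hG h11 h22 ζ (-μ) (-μ) ω
  simp only [LinearMap.BilinForm.ofSymmLeft_apply, h12, ← hZ, ← hW, hdet] at hdisc
  refine ⟨eZZ, eWW, eZW, ?_, ?_⟩
  · rw [hdisc]; funext p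
    simp only [Pi.neg_apply, Pi.pow_apply, Pi.mul_apply]; ring
  · rw [eZZ, eZW, eWW]
    exact GaussMap.form_eq_zero_iff hnII hflat

/-- The pull-back G*H of the ℂ-bilinear form H(η,η') = ⟨η,η'⟩ + i η∧η' by the Gauss
map, in the setting N₁ = Z^⊥∧W, N₂ = Z^⊥∧Z^⊤ with H(N₁,N₁) = H(N₂,N₂) = 0,
H(N₁,N₂) = -1, dG(Z^⊤) = i|II|N₁ - i⟨H,ν⟩N₂, dG(W) = -i⟨H,ν⟩N₁ + (K_N/|II| +
i(|H|²-K)/|II|)N₂ (|II| = |II(Z^⊤,Z^⊤)| > 0, |H|² = ⟨H,ν⟩², K_N = 0 → K = 0):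
H(dG(Z^⊤),dG(Z^⊤)) = -2|II|⟨H,ν⟩, H(dG(W),dG(W)) = -2(⟨H,ν⟩/|II|)(|H|²-K-iK_N),
H(dG(Z^⊤),dG(W)) = (2|H|²-K) - iK_N; the discriminant -det G*H equals -(K+iK_N)²,
and G*H ≡ 0 iff M is minimal (⟨H,ν⟩ = 0) with flat normal bundle (K_N = 0). -/
theorem stmt19 (Mp : Type) (B : Type) [AddCommGroup B] [Module (Mp → ℂ) B]
    (Hc : B → B → Mp → ℂ)
    (Hc_symm : ∀ x y, Hc x y = Hc y x)
    (Hc_addl : ∀ x y z, Hc (x + y) z = Hc x z + Hc y z)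
    (Hc_smull : ∀ (c : Mp → ℂ) (x y : B), Hc (c • x) y = c * Hc x y)
    (N1 N2 : B)
    (h11 : Hc N1 N1 = 0) (h22 : Hc N2 N2 = 0)
    (h12 : Hc N1 N2 = fun _ => (-1 : ℂ))
    (a nII mH hsq K KN : Mp → ℝ)
    (hnII : ∀ p, 0 < nII p)
    (hKN : KN = a * nII)
    (hsqdef : hsq = mH ^ 2)
    (hflat : KN = 0 → K = 0)
    (dGZ dGW : B)
    (hdGZ : dGZ = ((fun p => Complex.I * (nII p : ℂ)) • N1)
        - ((fun p => Complex.I * (mH p : ℂ)) • N2))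
    (hdGW : dGW = (-((fun p => Complex.I * (mH p : ℂ)) • N1))
        + ((fun p => ((KN p / nII p : ℝ) : ℂ)
            + Complex.I * ((hsq p - K p) / nII p : ℝ)) • N2)) :
    Hc dGZ dGZ = (fun p => ((-2 * nII p * mH p : ℝ) : ℂ))
    ∧ Hc dGW dGW
        = (fun p => -2 * ((mH p / nII p : ℝ) : ℂ)
            * (((hsq p - K p : ℝ) : ℂ) - Complex.I * (KN p : ℂ)))
    ∧ Hc dGZ dGW = (fun p => ((2 * hsq p - K p : ℝ) : ℂ) - Complex.I * (KN p : ℂ))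
    ∧ -((Hc dGZ dGW) ^ 2 - Hc dGZ dGZ * Hc dGW dGW)
        = (fun p => -((K p : ℂ) + Complex.I * (KN p : ℂ)) ^ 2)
    ∧ ((Hc dGZ dGZ = 0 ∧ Hc dGZ dGW = 0 ∧ Hc dGW dGW = 0) ↔ (mH = 0 ∧ KN = 0)) :=
  stmt19_general Mp B Hc Hc_symm Hc_addl Hc_smull N1 N2 h11 h22 h12 nII mH hsq K KN hnII hsqdef
    hflat dGZ dGW hdGZ hdGW
end
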